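/- In U(gl(3|1))[[t]]: [T, E₂₁] = −(t/2)(T² + 1)E₂₃, [T', E₂₁] = (t/2)(T'² + 1)E₂₃, [T, E₃₂] = (t/2)(T² + 1)E₁₂, [T', E₃₂] = −(t/2)(T'² + 1)E₁₂, [E₂₃, E₂₁] = −(t/4)(T − T')E₂₃², [E₁₂, E₃₂] = (t/4)(T − T')E₁₂², and T, T' commute with E₁₂ and with E₂₃. -/

import Mathlib

/-!
Put `a = e₁₃` and `x = t a`; then `s = √(1 + x²)`, `T = x + s` and `T' = -x + s` are `f(x)` for
power series `f ∈ ℂ⟦X⟧`. Each `y` below has `⁅a, y⁆` commuting with `a` (`⁅a, e₂₁⁆ = -e₂₃`,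
`⁅a, e₃₂⁆ = e₁₂`, `⁅a, h₁₃⁆ = -2a`, and `a` commutes with `e₁₂`, `e₂₃`), so `⁅·, y⁆` acts on `f(x)`
as the derivation `t ⁅a, y⁆ d/dx`. The `t²`-corrections in `E₂₁` and `E₃₂` are exactly what turns
this into `⁅f(x), E⁆ = t (1 + x²) f'(x) ⁅a, y⁆`, and `f = ±X + √(1 + X²)` satisfies
`2 (1 + X²) f' = ±(f² + 1)`. The brackets `⁅E₂₃, E₂₁⁆` and `⁅E₁₂, E₃₂⁆` only involve `T - T' = 2x`.
-/

noncomputable section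

namespace SuperJordanian

open scoped BigOperators

/-- The generalized binomial coefficient `C(1/2, n)`. -/
def cHalf (n : ℕ) : ℂ :=
  (∏ i ∈ Finset.range n, ((1 : ℂ) / 2 - (i : ℂ))) / (n.factorial : ℂ)

/-- Parity for `gl(3|1)`: `p(i,j) = 1` iff exactly one of `i`, `j` equals the fourth index. -/
def par (i j : Fin 4) : ℕ :=
  if (i = 3 ∧ j ≠ 3) ∨ (i ≠ 3 ∧ j = 3) then 1 else 0

/-- The generator `e_{ij}` in the free algebra. -/
def gen (i j : Fin 4) : FreeAlgebra ℂ (Fin 4 × Fin 4) := FreeAlgebra.ι ℂ (i, j)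

/-- Defining relations of the enveloping algebra `U(gl(3|1))`:
`e_{ij} e_{kl} - (-1)^{p(i,j)p(k,l)} e_{kl} e_{ij}
  = δ_{jk} e_{il} - (-1)^{p(i,j)p(k,l)} δ_{li} e_{kj}`. -/
inductive Rel : FreeAlgebra ℂ (Fin 4 × Fin 4) → FreeAlgebra ℂ (Fin 4 × Fin 4) → Prop
  | mk (i j k l : Fin 4) :
      Rel (gen i j * gen k l - ((-1 : ℂ) ^ (par i j * par k l)) • (gen k l * gen i j))
        ((if j = k then gen i l else 0)
          - ((-1 : ℂ) ^ (par i j * par k l)) • (if l = i then gen k j else 0))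

/-- The enveloping algebra `U = U(gl(3|1))`. -/
abbrev U : Type := RingQuot Rel

/-- The image of `e_{ij}` in `U`. -/
def e (i j : Fin 4) : U := RingQuot.mkAlgHom ℂ Rel (gen i j)

/-- The formal power series ring `U[[t]]`. -/
abbrev V : Type := PowerSeries U

/-- The central formal variable `t`. -/
def tv : V := PowerSeries.X

/-- The inclusion `U → U[[t]]` as constant power series. -/
def C : U →+* V := PowerSeries.C

def h₁₂ : U := e 0 0 - e 1 1
def h₂₃ : U := e 1 1 - e 2 2
def h₁₃ : U := e 0 0 - e 2 2
def h₃₄ : U := e 2 2 + e 3 3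
def h₁₄ : U := e 0 0 + e 3 3

/-- `s = Σ_{n ≥ 0} C(1/2, n) t^{2n} e₁₃^{2n}`, so that `s² = 1 + t² e₁₃²`. -/
def s : V := PowerSeries.mk fun m => if m % 2 = 0 then cHalf (m / 2) • ((e 0 2) ^ m) else 0

def T : V := tv * C (e 0 2) + s
def T' : V := -(tv * C (e 0 2)) + s
def H₁₃ : V := s * C h₁₃
def E₃₁ : V := C (e 2 0) - ((1 : ℂ) / 4) • (tv ^ 2 * C (e 0 2 * (h₁₃ ^ 2 - 1)))
def H₁₂ : V := C h₁₂ + ((1 : ℂ) / 2) • (tv ^ 2 * C ((e 0 2) ^ 2 * h₁₃))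
def E₁₂ : V := C (e 0 1)
def E₂₁ : V := C (e 1 0) + ((1 : ℂ) / 4) • (tv ^ 2 * C (e 1 2 * e 0 2 * (2 * h₁₃ + 1)))
def H₂₃ : V := C h₂₃ + ((1 : ℂ) / 2) • (tv ^ 2 * C ((e 0 2) ^ 2 * h₁₃))
def E₂₃ : V := C (e 1 2)
def E₃₂ : V := C (e 2 1) - ((1 : ℂ) / 4) • (tv ^ 2 * C (e 0 1 * e 0 2 * (2 * h₁₃ + 1)))
def H₃₄ : V := C h₃₄ - ((1 : ℂ) / 2) • (tv ^ 2 * C ((e 0 2) ^ 2 * h₁₃))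
def E₃₄ : V := C (e 2 3) - ((1 : ℂ) / 4) • (tv ^ 2 * C (e 0 2 * e 0 3 * (2 * h₁₃ + 1)))
def E₄₃ : V := C (e 3 2)
def E₁₄ : V := C (e 0 3)
def E₄₁ : V := C (e 3 0) + ((1 : ℂ) / 4) • (tv ^ 2 * C (e 0 2 * e 3 2 * (2 * h₁₃ + 1)))
def H₁₄ : V := C h₁₄ + ((1 : ℂ) / 2) • (tv ^ 2 * C ((e 0 2) ^ 2 * h₁₃))

/-- Commutator `[a, b] = ab - ba`. -/
def br (a b : V) : V := a * b - b * a

/-- Anticommutator `{a, b} = ab + ba`. -/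
def ac (a b : V) : V := a * b + b * a

end SuperJordanian

section

attribute [local instance 100] LieRing.ofAssociativeRing

section Commutator

variable {A : Type*} [Ring A]

theorem lie_mul_of_commute {x y w : A} (h : Commute x y) : ⁅x, y * w⁆ = y * ⁅x, w⁆ := by
  rw [Ring.lie_def, Ring.lie_def, mul_sub, ← mul_assoc, h.eq, mul_assoc, mul_assoc]

theorem pow_succ_lie_of_commute_lie {a y : A} (h : Commute a ⁅a, y⁆) (n : ℕ) :
    ⁅a ^ (n + 1), y⁆ = (n + 1) • (a ^ n * ⁅a, y⁆) := by
  induction n with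
  | zero => simp
  | succ n ih =>
    have hsplit : ⁅a ^ (n + 2), y⁆ = a * ⁅a ^ (n + 1), y⁆ + ⁅a, y⁆ * a ^ (n + 1) := by
      simp only [Ring.lie_def, pow_succ' a (n + 1)]; noncomm_ring
    rw [hsplit, ih, mul_smul_comm, ← mul_assoc, ← pow_succ', ← (h.pow_left (n + 1)).eq,
      succ_nsmul _ (n + 1)]

theorem RingHom.map_lie {B : Type*} [Ring B] (f : A →+* B) (x y : A) : f ⁅x, y⁆ = ⁅f x, f y⁆ := by
  simp only [Ring.lie_def, map_sub, map_mul]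

end Commutator

namespace PowerSeries

section SqrtOneAddXSq

variable (K : Type*) [Field K] [CharZero K]

def sqrtOneAddXSq : K⟦X⟧ := expand 2 two_ne_zero (binomialSeries K (2⁻¹ : K))

variable {K}

theorem coeff_sqrtOneAddXSq (n : ℕ) :
    coeff n (sqrtOneAddXSq K) = if 2 ∣ n then Ring.choose (2⁻¹ : K) (n / 2) else 0 := by
  rw [sqrtOneAddXSq, coeff_expand, binomialSeries_coeff, smul_eq_mul, mul_one]

theorem sqrtOneAddXSq_sq : sqrtOneAddXSq K ^ 2 = 1 + X ^ 2 := by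
  rw [sqrtOneAddXSq, ← map_pow, sq, ← binomialSeries_add, show (2⁻¹ + 2⁻¹ : K) = 1 by norm_num]
  have h := binomialSeries_nat (R := K) (A := K) 1
  rw [Nat.cast_one] at h
  rw [h, pow_one, map_add, map_one, expand_X]

theorem sqrtOneAddXSq_mul_derivative : sqrtOneAddXSq K * d⁄dX K (sqrtOneAddXSq K) = X := by
  have h := congrArg (d⁄dX K) (sqrtOneAddXSq_sq (K := K))
  rw [derivative_pow, map_add, derivative_one, derivative_pow, derivative_X] at h
  have h2 : (2 : K⟦X⟧) ≠ 0 := by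
    rw [← map_ofNat C 2]; exact (map_ne_zero_iff _ C_injective).2 two_ne_zero
  apply mul_left_cancel₀ h2
  linear_combination h

theorem one_add_X_sq_mul_derivative_X_add_sqrtOneAddXSq :
    (1 + X ^ 2) * d⁄dX K (X + sqrtOneAddXSq K) = (1 / 2 : K) • ((X + sqrtOneAddXSq K) ^ 2 + 1) := by
  have hc : C (1 / 2 : K) * 2 = 1 := by rw [← map_ofNat C 2, ← map_mul]; norm_num
  rw [smul_eq_C_mul, map_add, derivative_X]
  linear_combination sqrtOneAddXSq K * sqrtOneAddXSq_mul_derivative (K := K)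
    - (d⁄dX K (sqrtOneAddXSq K) + C (1 / 2 : K)) * sqrtOneAddXSq_sq (K := K)
    - (X ^ 2 + X * sqrtOneAddXSq K + 1) * hc

theorem one_add_X_sq_mul_derivative_neg_X_add_sqrtOneAddXSq :
    (1 + X ^ 2) * d⁄dX K (-X + sqrtOneAddXSq K)
      = -((1 / 2 : K) • ((-X + sqrtOneAddXSq K) ^ 2 + 1)) := by
  have hc : C (1 / 2 : K) * 2 = 1 := by rw [← map_ofNat C 2, ← map_mul]; norm_num
  rw [smul_eq_C_mul, map_add, map_neg, derivative_X]
  linear_combination sqrtOneAddXSq K * sqrtOneAddXSq_mul_derivative (K := K)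
    + (C (1 / 2 : K) - d⁄dX K (sqrtOneAddXSq K)) * sqrtOneAddXSq_sq (K := K)
    + (X ^ 2 - X * sqrtOneAddXSq K + 1) * hc

end SqrtOneAddXSq

section RescaleMap

variable {R A : Type*} [CommRing R] [Ring A] [Algebra R A]

/-- `f ↦ f(a X)` for `a` in a possibly noncommutative `R`-algebra `A`; when `A` is commutative
this is `rescale a ∘ map (algebraMap R A)`. -/
def rescaleMap (a : A) : R⟦X⟧ →ₐ[R] A⟦X⟧ where
  toFun f := mk fun n => coeff n f • a ^ n
  map_one' := by
    ext n; simp only [coeff_mk, coeff_one]; split_ifs with h <;> simp [h]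
  map_mul' f g := by
    ext n
    simp only [coeff_mk, coeff_mul, Finset.sum_smul]
    refine Finset.sum_congr rfl fun ij hij => ?_
    rw [smul_mul_smul_comm, ← pow_add, Finset.HasAntidiagonal.mem_antidiagonal.mp hij]
  map_zero' := by ext; simp
  map_add' f g := by ext; simp [add_smul]
  commutes' r := by
    ext n
    simp only [coeff_mk, coeff_C, algebraMap_apply, Algebra.algebraMap_self, RingHom.id_apply]
    split_ifs with h <;> simp [h, Algebra.smul_def]

variable (a : A)

@[simp]
theorem coeff_rescaleMap (f : R⟦X⟧) (n : ℕ) : coeff n (rescaleMap a f) = coeff n f • a ^ n :=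
  coeff_mk n fun n => coeff n f • a ^ n

theorem rescaleMap_X : rescaleMap a (X : R⟦X⟧) = X * C a := by
  ext (_ | _ | n) <;> simp [coeff_X]

variable {a}

theorem commute_rescaleMap_C {y : A} (h : Commute a y) (f : R⟦X⟧) :
    Commute (rescaleMap a f) (C y) := by
  ext n; simp [coeff_mul_C, coeff_C_mul, (h.pow_left n).eq]

theorem lie_rescaleMap_C {y : A} (h : Commute a ⁅a, y⁆) (f : R⟦X⟧) :
    ⁅rescaleMap a f, C y⁆ = rescaleMap a (d⁄dX R f) * (X * C ⁅a, y⁆) := by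
  rw [← mul_assoc, (commute_X _).eq, mul_assoc]
  ext (_ | n)
  · rw [coeff_zero_X_mul, Ring.lie_def, map_sub, coeff_mul_C, coeff_C_mul, coeff_rescaleMap,
      pow_zero, smul_mul_assoc, one_mul, mul_smul_comm, mul_one, sub_self]
  · rw [coeff_succ_X_mul, coeff_mul_C, coeff_rescaleMap, coeff_derivative, Ring.lie_def, map_sub,
      coeff_mul_C, coeff_C_mul, coeff_rescaleMap, smul_mul_assoc, mul_smul_comm, ← smul_sub,
      ← Ring.lie_def, pow_succ_lie_of_commute_lie h, mul_smul, smul_mul_assoc, smul_mul_assoc,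
      ← Nat.cast_smul_eq_nsmul R, Nat.cast_succ]

theorem X_sq_mul_C_mul_rescaleMap {z : A} (hz : Commute a z) (g : R⟦X⟧) :
    X ^ 2 * C (z * a) * rescaleMap a g = rescaleMap a (X * g) * (X * C z) := by
  have hzC : Commute (C z) (C a * rescaleMap a g) :=
    (hz.map C).symm.mul_right (commute_rescaleMap_C hz g).symm
  rw [map_mul (rescaleMap a) X g, rescaleMap_X, map_mul C z a, mul_assoc, mul_assoc (C z), hzC.eq]
  calc X ^ 2 * (C a * rescaleMap a g * C z) = X * (X * (C a * rescaleMap a g)) * C z := by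
        simp only [sq, mul_assoc]
    _ = X * (C a * rescaleMap a g * X) * C z := by rw [(commute_X _).eq]
    _ = X * C a * rescaleMap a g * (X * C z) := by simp only [mul_assoc]

theorem lie_C_X_sq_mul_C {b h : A} (hab : Commute a b) (hh : ⁅h, b⁆ = b) :
    ⁅C b, X ^ 2 * C (b * a * (2 * h + 1))⁆ = -(X * ((2 : R) • (X * C a) * C b ^ 2)) := by
  have hlie : ⁅b, b * a * (2 * h + 1)⁆ = -(2 * (a * b ^ 2)) := by
    rw [lie_mul_of_commute ((Commute.refl b).mul_right hab.symm), two_mul, lie_add, lie_add,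
      ← lie_skew, hh, (Commute.one_right b).lie_eq, ← mul_assoc, ← hab.eq]
    noncomm_ring
  rw [lie_mul_of_commute (commute_X_pow _ 2), ← RingHom.map_lie, hlie, map_neg, map_mul,
    map_ofNat, map_mul, map_pow, smul_mul_assoc, mul_smul_comm, ← mul_assoc X (X * C a),
    ← mul_assoc X X, ← sq, mul_assoc]
  simp only [two_mul, mul_add, mul_neg]
  module

end RescaleMap

section Deformed

variable {K A : Type*} [Field K] [Ring A] [Algebra K A] {a : A}

theorem lie_rescaleMap_C_sub_smul_X_sq_mul_C [CharZero K] {y b h : A} (hy : ⁅a, y⁆ = b)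
    (hb : Commute a b) (hh : ⁅h, a⁆ = 2 * a) (f : K⟦X⟧) :
    ⁅rescaleMap a f, C y - (1 / 4 : K) • (X ^ 2 * C (b * a * (2 * h + 1)))⁆
      = rescaleMap a ((1 + X ^ 2) * d⁄dX K f) * (X * C b) := by
  subst hy
  have hlie_h : ⁅rescaleMap a f, C h⁆ = -(2 * rescaleMap a (d⁄dX K f * X)) := by
    have hah : ⁅a, h⁆ = -(2 * a) := by rw [← lie_skew, hh]
    have : Commute a ⁅a, h⁆ := hah ▸ ((Commute.ofNat_right a 2).mul_right (.refl a)).neg_right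
    rw [lie_rescaleMap_C this, hah, map_neg, map_mul, map_ofNat, map_mul, rescaleMap_X]
    noncomm_ring
  have hcomm : Commute (rescaleMap a f) (X ^ 2 * C (⁅a, y⁆ * a)) :=
    (commute_X_pow _ 2).mul_right (commute_rescaleMap_C (hb.mul_right (.refl a)) f)
  have hlie_twisted : ⁅rescaleMap a f, X ^ 2 * C (⁅a, y⁆ * a * (2 * h + 1))⁆
      = -(2 * (2 * (X ^ 2 * C (⁅a, y⁆ * a) * rescaleMap a (d⁄dX K f * X)))) := by
    rw [map_mul C (⁅a, y⁆ * a) (2 * h + 1), ← mul_assoc, lie_mul_of_commute hcomm, map_add,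
      map_one, two_mul, map_add, lie_add, lie_add, (Commute.one_right (rescaleMap a f)).lie_eq,
      add_zero, hlie_h]
    noncomm_ring
  rw [lie_sub, lie_smul, lie_rescaleMap_C hb, hlie_twisted, X_sq_mul_C_mul_rescaleMap hb,
    mul_comm _ X, ← mul_assoc (X : K⟦X⟧), ← sq, add_mul, one_mul, map_add, add_mul]
  simp only [two_mul]
  module

theorem lie_rescaleMap_C_add_smul_X_sq_mul_C [CharZero K] {y b h : A} (hy : ⁅y, a⁆ = b)
    (hb : Commute a b) (hh : ⁅h, a⁆ = 2 * a) (f : K⟦X⟧) :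
    ⁅rescaleMap a f, C y + (1 / 4 : K) • (X ^ 2 * C (b * a * (2 * h + 1)))⁆
      = -(rescaleMap a ((1 + X ^ 2) * d⁄dX K f) * (X * C b)) := by
  have hy' : ⁅a, y⁆ = -b := by rw [← lie_skew, hy]
  rw [← mul_neg, ← mul_neg, ← map_neg, ← lie_rescaleMap_C_sub_smul_X_sq_mul_C hy' hb.neg_right hh,
    neg_mul, neg_mul, map_neg, mul_neg, smul_neg, sub_neg_eq_add]

theorem lie_C_C_add_smul_X_sq_mul_C {b y h : A} (hab : Commute a b) (hby : Commute b y)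
    (hh : ⁅h, b⁆ = b) :
    ⁅C b, C y + (1 / 4 : K) • (X ^ 2 * C (b * a * (2 * h + 1)))⁆
      = -((1 / 4 : K) • (X * ((2 : K) • (X * C a) * C b ^ 2))) := by
  rw [lie_add, ← RingHom.map_lie, hby.lie_eq, map_zero, zero_add, lie_smul,
    lie_C_X_sq_mul_C (R := K) hab hh, smul_neg]

theorem lie_C_C_sub_smul_X_sq_mul_C {b y h : A} (hab : Commute a b) (hby : Commute b y)
    (hh : ⁅h, b⁆ = b) :
    ⁅C b, C y - (1 / 4 : K) • (X ^ 2 * C (b * a * (2 * h + 1)))⁆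
      = (1 / 4 : K) • (X * ((2 : K) • (X * C a) * C b ^ 2)) := by
  rw [lie_sub, ← RingHom.map_lie, hby.lie_eq, map_zero, zero_sub, lie_smul,
    lie_C_X_sq_mul_C (R := K) hab hh, smul_neg, neg_neg]

end Deformed

end PowerSeries

end

namespace SuperJordanian

open PowerSeries (X rescaleMap sqrtOneAddXSq)
open scoped PowerSeries

theorem lie_e_e (i j k l : Fin 4) (h : par i j * par k l = 0) :
    ⁅e i j, e k l⁆ = (if j = k then e i l else 0) - (if l = i then e k j else 0) := by
  rw [Ring.lie_def]
  simpa only [e, h, pow_zero, one_smul, map_sub, map_mul, apply_ite (RingQuot.mkAlgHom ℂ Rel),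
    map_zero] using RingQuot.mkAlgHom_rel ℂ (Rel.mk i j k l)

theorem commute_e02_e01 : Commute (e 0 2) (e 0 1) :=
  commute_iff_lie_eq.2 (by rw [lie_e_e _ _ _ _ (by decide)]; simp)

theorem commute_e02_e12 : Commute (e 0 2) (e 1 2) :=
  commute_iff_lie_eq.2 (by rw [lie_e_e _ _ _ _ (by decide)]; simp)

theorem commute_e12_e10 : Commute (e 1 2) (e 1 0) :=
  commute_iff_lie_eq.2 (by rw [lie_e_e _ _ _ _ (by decide)]; simp)

theorem commute_e01_e21 : Commute (e 0 1) (e 2 1) :=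
  commute_iff_lie_eq.2 (by rw [lie_e_e _ _ _ _ (by decide)]; simp)

theorem lie_e10_e02 : ⁅e 1 0, e 0 2⁆ = e 1 2 := by
  rw [lie_e_e _ _ _ _ (by decide)]; simp

theorem lie_e02_e21 : ⁅e 0 2, e 2 1⁆ = e 0 1 := by
  rw [lie_e_e _ _ _ _ (by decide)]; simp

theorem lie_h₁₃_e02 : ⁅h₁₃, e 0 2⁆ = 2 * e 0 2 := by
  rw [h₁₃, Ring.lie_def, sub_mul, mul_sub, sub_sub_sub_comm, ← Ring.lie_def, ← Ring.lie_def,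
    lie_e_e _ _ _ _ (by decide), lie_e_e _ _ _ _ (by decide)]
  simp only [Fin.isValue, ↓reduceIte, Fin.reduceEq, sub_zero, zero_sub, sub_neg_eq_add, two_mul]

theorem lie_h₁₃_e12 : ⁅h₁₃, e 1 2⁆ = e 1 2 := by
  rw [h₁₃, Ring.lie_def, sub_mul, mul_sub, sub_sub_sub_comm, ← Ring.lie_def, ← Ring.lie_def,
    lie_e_e _ _ _ _ (by decide), lie_e_e _ _ _ _ (by decide)]; simp

theorem lie_h₁₃_e01 : ⁅h₁₃, e 0 1⁆ = e 0 1 := by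
  rw [h₁₃, Ring.lie_def, sub_mul, mul_sub, sub_sub_sub_comm, ← Ring.lie_def, ← Ring.lie_def,
    lie_e_e _ _ _ _ (by decide), lie_e_e _ _ _ _ (by decide)]; simp

theorem choose_inv_two_eq_cHalf (n : ℕ) : Ring.choose (2⁻¹ : ℂ) n = cHalf n := by
  rw [Ring.choose_eq_smul, ← Polynomial.aeval_eq_smeval, ← Polynomial.eval_map_algebraMap,
    descPochhammer_map, descPochhammer_eval_eq_prod_range, smul_eq_mul, cHalf, one_div,
    inv_mul_eq_div]

theorem s_eq_rescaleMap : s = rescaleMap (e 0 2) (sqrtOneAddXSq ℂ) := by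
  ext m
  rw [PowerSeries.coeff_rescaleMap, PowerSeries.coeff_sqrtOneAddXSq, s, PowerSeries.coeff_mk]
  split_ifs <;> simp_all [choose_inv_two_eq_cHalf, Nat.dvd_iff_mod_eq_zero]

theorem T_eq_rescaleMap : T = rescaleMap (e 0 2) (X + sqrtOneAddXSq ℂ) := by
  rw [map_add, PowerSeries.rescaleMap_X, ← s_eq_rescaleMap]; rfl

theorem T'_eq_rescaleMap : T' = rescaleMap (e 0 2) (-X + sqrtOneAddXSq ℂ) := by
  rw [map_add, map_neg, PowerSeries.rescaleMap_X, ← s_eq_rescaleMap]; rfl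

theorem T_sub_T' : T - T' = (2 : ℂ) • (tv * C (e 0 2)) := by
  rw [T_eq_rescaleMap, T'_eq_rescaleMap, ← map_sub, add_sub_add_right_eq_sub, sub_neg_eq_add,
    ← two_smul ℂ, map_smul, PowerSeries.rescaleMap_X]
  rfl

theorem commute_tv (v : V) : Commute v tv := PowerSeries.commute_X v

theorem br_eq_lie (v w : V) : br v w = ⁅v, w⁆ := rfl

theorem lie_rescaleMap_E₂₁ (f : ℂ⟦X⟧) :
    ⁅rescaleMap (e 0 2) f, E₂₁⁆ = -(rescaleMap (e 0 2) ((1 + X ^ 2) * d⁄dX ℂ f) * (tv * E₂₃)) :=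
  PowerSeries.lie_rescaleMap_C_add_smul_X_sq_mul_C lie_e10_e02 commute_e02_e12 lie_h₁₃_e02 f

theorem lie_rescaleMap_E₃₂ (f : ℂ⟦X⟧) :
    ⁅rescaleMap (e 0 2) f, E₃₂⁆ = rescaleMap (e 0 2) ((1 + X ^ 2) * d⁄dX ℂ f) * (tv * E₁₂) :=
  PowerSeries.lie_rescaleMap_C_sub_smul_X_sq_mul_C lie_e02_e21 commute_e02_e01 lie_h₁₃_e02 f

theorem br_T_E₂₁ : br T E₂₁ = -(((1 : ℂ) / 2) • (tv * ((T ^ 2 + 1) * E₂₃))) := by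
  rw [br_eq_lie, T_eq_rescaleMap, lie_rescaleMap_E₂₁,
    PowerSeries.one_add_X_sq_mul_derivative_X_add_sqrtOneAddXSq, map_smul, map_add, map_pow,
    map_one, smul_mul_assoc, (commute_tv _).left_comm]

-- `neg_mul` gets explicit arguments: the negation coming from `U = RingQuot _` matches the ring
-- negation only at default transparency.
theorem br_T'_E₂₁ : br T' E₂₁ = ((1 : ℂ) / 2) • (tv * ((T' ^ 2 + 1) * E₂₃)) := by
  rw [br_eq_lie, T'_eq_rescaleMap, lie_rescaleMap_E₂₁,
    PowerSeries.one_add_X_sq_mul_derivative_neg_X_add_sqrtOneAddXSq, map_neg, map_smul, map_add,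
    map_pow, map_one, ← T'_eq_rescaleMap, neg_mul ((1 / 2 : ℂ) • (T' ^ 2 + 1)) (tv * E₂₃), neg_neg,
    smul_mul_assoc, (commute_tv _).left_comm]

theorem br_T_E₃₂ : br T E₃₂ = ((1 : ℂ) / 2) • (tv * ((T ^ 2 + 1) * E₁₂)) := by
  rw [br_eq_lie, T_eq_rescaleMap, lie_rescaleMap_E₃₂,
    PowerSeries.one_add_X_sq_mul_derivative_X_add_sqrtOneAddXSq, map_smul, map_add, map_pow,
    map_one, smul_mul_assoc, (commute_tv _).left_comm]

theorem br_T'_E₃₂ : br T' E₃₂ = -(((1 : ℂ) / 2) • (tv * ((T' ^ 2 + 1) * E₁₂))) := by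
  rw [br_eq_lie, T'_eq_rescaleMap, lie_rescaleMap_E₃₂,
    PowerSeries.one_add_X_sq_mul_derivative_neg_X_add_sqrtOneAddXSq, map_neg, map_smul, map_add,
    map_pow, map_one, ← T'_eq_rescaleMap, neg_mul ((1 / 2 : ℂ) • (T' ^ 2 + 1)) (tv * E₁₂),
    smul_mul_assoc, (commute_tv _).left_comm]

theorem br_E₂₃_E₂₁ : br E₂₃ E₂₁ = -(((1 : ℂ) / 4) • (tv * ((T - T') * E₂₃ ^ 2))) := by
  rw [br_eq_lie, T_sub_T']
  exact PowerSeries.lie_C_C_add_smul_X_sq_mul_C commute_e02_e12 commute_e12_e10 lie_h₁₃_e12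

theorem br_E₁₂_E₃₂ : br E₁₂ E₃₂ = ((1 : ℂ) / 4) • (tv * ((T - T') * E₁₂ ^ 2)) := by
  rw [br_eq_lie, T_sub_T']
  exact PowerSeries.lie_C_C_sub_smul_X_sq_mul_C commute_e02_e01 commute_e01_e21 lie_h₁₃_e01

theorem lie_rescaleMap_C_eq_zero {y : U} (h : Commute (e 0 2) y) (f : ℂ⟦X⟧) :
    ⁅rescaleMap (e 0 2) f, C y⁆ = 0 :=
  (PowerSeries.commute_rescaleMap_C h f).lie_eq

/-- commutators of `T`, `T'` with the deformed bosonic generators of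
`U(gl(3|1))[[t]]`. -/
theorem statement16 :
    br T E₂₁ = -(((1 : ℂ) / 2) • (tv * ((T ^ 2 + 1) * E₂₃))) ∧
    br T' E₂₁ = ((1 : ℂ) / 2) • (tv * ((T' ^ 2 + 1) * E₂₃)) ∧
    br T E₃₂ = ((1 : ℂ) / 2) • (tv * ((T ^ 2 + 1) * E₁₂)) ∧
    br T' E₃₂ = -(((1 : ℂ) / 2) • (tv * ((T' ^ 2 + 1) * E₁₂))) ∧
    br E₂₃ E₂₁ = -(((1 : ℂ) / 4) • (tv * ((T - T') * E₂₃ ^ 2))) ∧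
    br E₁₂ E₃₂ = ((1 : ℂ) / 4) • (tv * ((T - T') * E₁₂ ^ 2)) ∧
    br T E₁₂ = 0 ∧ br T' E₁₂ = 0 ∧ br T E₂₃ = 0 ∧ br T' E₂₃ = 0 := by
  refine ⟨br_T_E₂₁, br_T'_E₂₁, br_T_E₃₂, br_T'_E₃₂, br_E₂₃_E₂₁, br_E₁₂_E₃₂, ?_, ?_, ?_, ?_⟩ <;>
    rw [br_eq_lie]
  · rw [T_eq_rescaleMap]; exact lie_rescaleMap_C_eq_zero commute_e02_e01 _
  · rw [T'_eq_rescaleMap]; exact lie_rescaleMap_C_eq_zero commute_e02_e01 _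
  · rw [T_eq_rescaleMap]; exact lie_rescaleMap_C_eq_zero commute_e02_e12 _
  · rw [T'_eq_rescaleMap]; exact lie_rescaleMap_C_eq_zero commute_e02_e12 _

end SuperJordanian
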